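/- arXiv:0911.1590 — 4 statements merged into one kernel-verified Lean document; each statement's English description precedes it below -/
import Mathlib

section
/- Under the standing assumptions, the generalized semiflow S of generalized solutions is asymptotically compact: for every sequence of generalized solutions (u_j,φ̄_j) such that the set of initial values {(u_j(0), φ̄_j(0))} is bounded in (X,d_X), and for every sequence t_j → +∞, the sequence (u_j(t_j), φ̄_j(t_j)) admits a subsequence converging in (X,d_X). -/
open Filter MeasureTheory Set Topology
open scoped ENNReal NNReal Classical

noncomputable section

namespace GradientFlowPaper

/-- The conjugate exponent `p' = p/(p-1)`. -/
def conjExp (p : ℝ) : ℝ := p / (p - 1)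

variable {U : Type*}

section MetricDefs

variable [MetricSpace U]

/-- The local slope `|∂φ|(u) = limsup_{v → u} (φ(u) - φ(v))⁺ / d(u,v)`. -/
def localSlope (φ : U → EReal) (u : U) : ℝ≥0∞ :=
  Filter.limsup (fun v => ENNReal.ofReal ((φ u - φ v).toReal / dist u v)) (𝓝[≠] u)

/-- The strong relaxed slope `|∂⁺φ|(u)`:  the infimum of `liminf |∂φ|(uₙ)` over all
sequences `uₙ →σ u` with `φ(uₙ) → φ(u)`. -/
def strongRelaxedSlope (σ : TopologicalSpace U) (φ : U → EReal) (u : U) : ℝ≥0∞ :=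
  sInf { L : ℝ≥0∞ | ∃ un : ℕ → U,
    Filter.Tendsto un Filter.atTop (@nhds U σ u) ∧
    Filter.Tendsto (fun n => φ (un n)) Filter.atTop (nhds (φ u)) ∧
    L = Filter.liminf (fun n => localSlope φ (un n)) Filter.atTop }

/-- The weak relaxed slope `|∂⁻φ|(u, φ̄)`: the infimum of `liminf |∂φ|(uₙ)` over all
sequences `uₙ →σ u` with `φ(uₙ) → φ̄`. -/
def weakRelaxedSlope (σ : TopologicalSpace U) (φ : U → EReal) (u : U) (c : ℝ) : ℝ≥0∞ :=
  sInf { L : ℝ≥0∞ | ∃ un : ℕ → U,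
    Filter.Tendsto un Filter.atTop (@nhds U σ u) ∧
    Filter.Tendsto (fun n => φ (un n)) Filter.atTop (nhds (c : EReal)) ∧
    L = Filter.liminf (fun n => localSlope φ (un n)) Filter.atTop }

/-- `u ∈ AC^p([0,T]; U)`. -/
def ACpOn (p T : ℝ) (u : ℝ → U) : Prop :=
  ∃ m : ℝ → ℝ, MeasureTheory.MemLp m (ENNReal.ofReal p) (volume.restrict (Icc (0:ℝ) T)) ∧
    ∀ s t : ℝ, 0 ≤ s → s ≤ t → t ≤ T → dist (u s) (u t) ≤ ∫ r in s..t, m r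

/-- `u ∈ AC^p_loc([0,∞); U)`. -/
def ACploc (p : ℝ) (u : ℝ → U) : Prop := ∀ T : ℝ, 0 < T → ACpOn p T u

/-- The metric derivative `|u'|(t)`, encoded as the `limsup` of the difference quotients
(it coincides with the metric derivative at every point where the latter exists). -/
def metricDeriv (u : ℝ → U) (t : ℝ) : ℝ :=
  Filter.limsup (fun s => dist (u s) (u t) / |s - t|) (𝓝[≠] t)

/-- A generalized solution of the metric `p`-gradient flow of `φ`: a pair `(u, c)` with
`u ∈ AC^p_loc`, satisfying the energy inequality
`(1/p)∫ₛᵗ |u'|^p + (1/p')∫ₛᵗ |∂⁻φ|(u,c)^{p'} + c(t) ≤ c(s)` for `0 ≤ s ≤ t` and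
`φ(u(t)) ≤ c(t)` for `t ≥ 0`. -/
def IsGeneralizedSolution (σ : TopologicalSpace U) (φ : U → EReal) (p : ℝ)
    (u : ℝ → U) (c : ℝ → ℝ) : Prop :=
  ACploc p u ∧
  (∀ s t : ℝ, 0 ≤ s → s ≤ t →
    c t ≤ c s ∧
    ENNReal.ofReal (1/p) * (∫⁻ r in Ioc s t, ENNReal.ofReal (metricDeriv u r ^ p)) +
      ENNReal.ofReal (1/(conjExp p)) *
        (∫⁻ r in Ioc s t, weakRelaxedSlope σ φ (u r) (c r) ^ (conjExp p)) ≤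
      ENNReal.ofReal (c s - c t)) ∧
  (∀ t : ℝ, 0 ≤ t → φ (u t) ≤ (c t : EReal))

/-- Absolute continuity of a real function on `[a,b]`, encoded through the integral
representation by an integrable density. -/
def ACRealOn (a b : ℝ) (f : ℝ → ℝ) : Prop :=
  ∃ g : ℝ → ℝ, MeasureTheory.IntegrableOn g (Icc a b) ∧
    ∀ t ∈ Icc a b, f t = f a + ∫ r in a..t, g r

/-- Local absolute continuity on `[0,∞)`. -/
def LocACReal (f : ℝ → ℝ) : Prop := ∀ T : ℝ, 0 < T → ACRealOn 0 T f

/-- Energy solution on `[0,T]`. -/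
def IsEnergySolutionOn (σ : TopologicalSpace U) (φ : U → EReal) (p T : ℝ)
    (u : ℝ → U) : Prop :=
  ACpOn p T u ∧
  (∀ t ∈ Icc (0:ℝ) T, φ (u t) ≠ ⊤) ∧
  ACRealOn 0 T (fun t => (φ (u t)).toReal) ∧
  (∫⁻ t in Ioc (0:ℝ) T, strongRelaxedSlope σ φ (u t) ^ (conjExp p)) < ⊤ ∧
  (∀ᵐ t ∂(volume : Measure ℝ), t ∈ Ioc (0:ℝ) T →
    deriv (fun s => (φ (u s)).toReal) t + (1/p) * metricDeriv u t ^ p +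
      (1/(conjExp p)) * ((strongRelaxedSlope σ φ (u t)).toReal) ^ (conjExp p) = 0)

/-- Energy solution of the metric `p`-gradient flow of `φ` on `[0,∞)`. -/
def IsEnergySolution (σ : TopologicalSpace U) (φ : U → EReal) (p : ℝ) (u : ℝ → U) : Prop :=
  ∀ T : ℝ, 0 < T → IsEnergySolutionOn σ φ p T u

/-- `g` is a strong upper gradient for `φ`. -/
def IsStrongUpperGradient (φ : U → EReal) (g : U → ℝ≥0∞) : Prop :=
  ∀ u : ℝ → U, ACploc 1 u →
    Measurable (fun t => g (u t)) ∧
    ∀ s t : ℝ, 0 ≤ s → s ≤ t →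
      (φ (u t) - φ (u s)).abs ≤ ∫⁻ r in Ioc s t, g (u r) * ENNReal.ofReal (metricDeriv u r)

/-- `(λ,p)`-geodesic convexity of `φ`. -/
def GeodConvex (φ : U → EReal) (lam p : ℝ) : Prop :=
  ∀ v₀ v₁ : U, φ v₀ ≠ ⊤ → φ v₁ ≠ ⊤ →
    ∃ γ : ℝ → U, γ 0 = v₀ ∧ γ 1 = v₁ ∧
      (∀ s t : ℝ, 0 ≤ s → s ≤ t → t ≤ 1 →
        dist (γ s) (γ t) = (t - s) * dist (γ 0) (γ 1)) ∧
      (∀ t : ℝ, 0 ≤ t → t ≤ 1 →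
        φ (γ t) ≤ ((1 - t : ℝ) : EReal) * φ (γ 0) + ((t : ℝ) : EReal) * φ (γ 1)
          - (((lam / p) * t * (1 - t) * dist (γ 0) (γ 1) ^ p : ℝ) : EReal))

/-- The conditional continuity property (CONT). -/
def CondCont (σ : TopologicalSpace U) (φ : U → EReal) : Prop :=
  ∀ (un : ℕ → U) (u : U),
    Filter.Tendsto un Filter.atTop (@nhds U σ u) →
    (∃ C : ℝ, ∀ n, φ (un n) ≤ (C : EReal) ∧ localSlope φ (un n) ≤ ENNReal.ofReal C) →
    Filter.Tendsto (fun n => φ (un n)) Filter.atTop (nhds (φ u))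

/-- The standing assumptions (A1)–(A4) of the paper, together with the properness of `φ`
and `1 < p`. -/
structure StandingAssumptions (σ : TopologicalSpace U) (dσ : U → U → ℝ)
    (φ : U → EReal) (p : ℝ) : Prop where
  p_gt : 1 < p
  complete : CompleteSpace U
  σ_weaker : ∀ s : Set U, σ.IsOpen s → IsOpen s
  σ_hausdorff : @T2Space U σ
  d_σ_lsc : ∀ (un vn : ℕ → U) (u v : U),
    Filter.Tendsto un Filter.atTop (@nhds U σ u) →
    Filter.Tendsto vn Filter.atTop (@nhds U σ v) →
    dist u v ≤ Filter.liminf (fun n => dist (un n) (vn n)) Filter.atTop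
  dσ_eq_zero : ∀ u v : U, dσ u v = 0 ↔ u = v
  dσ_symm : ∀ u v : U, dσ u v = dσ v u
  dσ_triangle : ∀ u v w : U, dσ u w ≤ dσ u v + dσ v w
  dσ_weaker : ∀ (un : ℕ → U) (u : U), Filter.Tendsto un Filter.atTop (@nhds U σ u) →
    Filter.Tendsto (fun n => dσ (un n) u) Filter.atTop (nhds (0:ℝ))
  proper : (∃ u : U, φ u ≠ ⊤) ∧ ∀ u : U, φ u ≠ ⊥
  σ_lsc : ∀ (un : ℕ → U) (u : U), Filter.Tendsto un Filter.atTop (@nhds U σ u) →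
    φ u ≤ Filter.liminf (fun n => φ (un n)) Filter.atTop
  compact_sublevels : ∀ (C : ℝ) (un : ℕ → U), (∀ n, φ (un n) ≤ (C : EReal)) →
    ∃ (u : U) (k : ℕ → ℕ), StrictMono k ∧
      Filter.Tendsto (fun n => un (k n)) Filter.atTop (@nhds U σ u)

/-- The phase space `X = {(u,φ̄) ∈ D(φ) × ℝ : φ̄ ≥ φ(u)}`. -/
abbrev Phase (φ : U → EReal) := {z : U × ℝ // φ z.1 ≤ (z.2 : EReal)}

/-- The metric `d_X((u,φ̄),(u',φ̄')) = d_σ(u,u') + |φ̄ - φ̄'|` on the phase space. -/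
def phaseDist (dσ : U → U → ℝ) (φ : U → EReal) (z w : Phase φ) : ℝ :=
  dσ z.1.1 w.1.1 + |z.1.2 - w.1.2|

/-- The family `S` of all generalized solutions, as curves in the phase space. -/
def genSolSet (σ : TopologicalSpace U) (φ : U → EReal) (p : ℝ) :
    Set (ℝ≥0 → Phase φ) :=
  { g | ∃ (u : ℝ → U) (c : ℝ → ℝ), IsGeneralizedSolution σ φ p u c ∧
      ∀ t : ℝ≥0, (g t).1 = (u (t : ℝ), c (t : ℝ)) }

/-- The effective domain `D(φ)` as a type. -/
abbrev Dom (φ : U → EReal) := {u : U // φ u ≠ ⊤}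

/-- The metric `d_φ(u,v) = d_σ(u,v) + |φ(u) - φ(v)|` on `D(φ)`. -/
def domDist (dσ : U → U → ℝ) (φ : U → EReal) (u v : Dom φ) : ℝ :=
  dσ u.1 v.1 + |(φ u.1).toReal - (φ v.1).toReal|

/-- The family `E` of all energy solutions, as curves in `D(φ)`. -/
def energySolSet (σ : TopologicalSpace U) (φ : U → EReal) (p : ℝ) :
    Set (ℝ≥0 → Dom φ) :=
  { g | ∃ u : ℝ → U, IsEnergySolution σ φ p u ∧ ∀ t : ℝ≥0, (g t).1 = u (t : ℝ) }

/-- Projection `π₁` from the phase space onto `D(φ)`. -/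
def projPhase (φ : U → EReal) : Phase φ → Dom φ :=
  fun z => ⟨z.1.1, (lt_of_le_of_lt z.2 (EReal.coe_lt_top _)).ne⟩

end MetricDefs

section Semiflow

variable {X : Type*}

/-- Convergence of a sequence with respect to an explicit distance function. -/
def Converges (dX : X → X → ℝ) (f : ℕ → X) (x : X) : Prop :=
  Filter.Tendsto (fun n => dX (f n) x) Filter.atTop (nhds (0:ℝ))

/-- Ball's notion of a generalized semiflow: (H1) existence, (H2) translation,
(H3) concatenation, (H4) upper semicontinuity with respect to initial data. -/
def IsGenSemiflow (dX : X → X → ℝ) (G : Set (ℝ≥0 → X)) : Prop :=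
  (∀ x : X, ∃ g ∈ G, g 0 = x) ∧
  (∀ g ∈ G, ∀ τ : ℝ≥0, (fun t => g (t + τ)) ∈ G) ∧
  (∀ g ∈ G, ∀ h ∈ G, ∀ t : ℝ≥0, h 0 = g t →
    (fun τ => if τ ≤ t then g τ else h (τ - t)) ∈ G) ∧
  (∀ gs : ℕ → (ℝ≥0 → X), (∀ n, gs n ∈ G) → ∀ x : X,
    Converges dX (fun n => gs n 0) x →
    ∃ k : ℕ → ℕ, StrictMono k ∧ ∃ g ∈ G, g 0 = x ∧
      ∀ t : ℝ≥0, Converges dX (fun n => gs (k n) t) (g t))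

/-- `T(t)E = {g(t) : g ∈ G, g(0) ∈ E}`. -/
def Tset (G : Set (ℝ≥0 → X)) (t : ℝ≥0) (E : Set X) : Set X :=
  { x | ∃ g ∈ G, g 0 ∈ E ∧ g t = x }

/-- Boundedness of a set with respect to an explicit distance function. -/
def IsBoundedIn (dX : X → X → ℝ) (B : Set X) : Prop :=
  ∃ R : ℝ, ∀ x ∈ B, ∀ y ∈ B, dX x y ≤ R

/-- (Sequential) compactness of a set with respect to an explicit distance function. -/
def SeqCompactIn (dX : X → X → ℝ) (A : Set X) : Prop :=
  ∀ f : ℕ → X, (∀ n, f n ∈ A) →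
    ∃ x ∈ A, ∃ k : ℕ → ℕ, StrictMono k ∧ Converges dX (fun n => f (k n)) x

/-- `A` attracts `B`: the Hausdorff semidistance `e(T(t)B, A)` tends to `0` as `t → ∞`. -/
def AttractsIn (dX : X → X → ℝ) (G : Set (ℝ≥0 → X)) (A B : Set X) : Prop :=
  ∀ ε : ℝ, 0 < ε → ∃ T : ℝ≥0, ∀ t : ℝ≥0, T ≤ t → ∀ x ∈ Tset G t B, ∃ a ∈ A, dX x a < ε

/-- A global attractor: non-empty, compact, invariant, attracting all bounded sets. -/
def IsGlobalAttractor (dX : X → X → ℝ) (G : Set (ℝ≥0 → X)) (A : Set X) : Prop :=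
  A.Nonempty ∧ SeqCompactIn dX A ∧ (∀ t : ℝ≥0, Tset G t A = A) ∧
  ∀ B : Set X, IsBoundedIn dX B → AttractsIn dX G A B

/-- A complete orbit of `G`. -/
def IsCompleteOrbit (G : Set (ℝ≥0 → X)) (w : ℝ → X) : Prop :=
  ∀ s : ℝ, (fun t : ℝ≥0 => w (s + (t : ℝ))) ∈ G

/-- A rest point of `G`: a point whose constant curve is a complete orbit. -/
def IsRestPoint (G : Set (ℝ≥0 → X)) (x : X) : Prop :=
  IsCompleteOrbit G (fun _ => x)

/-- The ω-limit set of a single trajectory. -/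
def OmegaLimit (dX : X → X → ℝ) (g : ℝ≥0 → X) : Set X :=
  { x | ∃ tn : ℕ → ℝ≥0, Filter.Tendsto (fun n => (tn n : ℝ)) Filter.atTop Filter.atTop ∧
      Converges dX (fun n => g (tn n)) x }

/-- (C0): strong measurability of a curve, i.e. a.e. pointwise limit on `(0,∞)` of
measurable countably-valued maps. -/
def StronglyMeasurableCurve (dX : X → X → ℝ) (g : ℝ≥0 → X) : Prop :=
  ∃ f : ℕ → ℝ≥0 → X,
    (∀ j, (Set.range (f j)).Countable ∧ ∀ x : X, MeasurableSet {t : ℝ≥0 | f j t = x}) ∧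
    ∀ᵐ t ∂(volume : Measure ℝ), 0 < t →
      Filter.Tendsto (fun j => dX (f j t.toNNReal) (g t.toNNReal)) Filter.atTop (nhds (0:ℝ))

/-- (C1): continuity of a curve on `(0,∞)`. -/
def ContCurveOnPos (dX : X → X → ℝ) (g : ℝ≥0 → X) : Prop :=
  ∀ t : ℝ≥0, 0 < t → ∀ tn : ℕ → ℝ≥0, Filter.Tendsto tn Filter.atTop (nhds t) →
    Converges dX (fun n => g (tn n)) (g t)

/-- (C3): continuity of a curve on `[0,∞)`. -/
def ContCurve (dX : X → X → ℝ) (g : ℝ≥0 → X) : Prop :=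
  ∀ t : ℝ≥0, ∀ tn : ℕ → ℝ≥0, Filter.Tendsto tn Filter.atTop (nhds t) →
    Converges dX (fun n => g (tn n)) (g t)

/-- (C2): compactness with local uniform convergence on compact subsets of `(0,∞)`. -/
def C2Property (dX : X → X → ℝ) (G : Set (ℝ≥0 → X)) : Prop :=
  ∀ gs : ℕ → (ℝ≥0 → X), (∀ n, gs n ∈ G) → ∀ x : X, Converges dX (fun n => gs n 0) x →
    ∃ k : ℕ → ℕ, StrictMono k ∧ ∃ g ∈ G, g 0 = x ∧
      ∀ a b : ℝ≥0, 0 < a → ∀ ε : ℝ, 0 < ε →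
        ∃ N : ℕ, ∀ n, N ≤ n → ∀ t : ℝ≥0, a ≤ t → t ≤ b → dX (gs (k n) t) (g t) < ε

/-- A Lyapunov function for `G`: continuous, decreasing along solutions, and constant
only along stationary complete orbits. -/
def IsLyapunov (dX : X → X → ℝ) (G : Set (ℝ≥0 → X)) (V : X → ℝ) : Prop :=
  (∀ (x : X) (xn : ℕ → X), Converges dX xn x →
    Filter.Tendsto (fun n => V (xn n)) Filter.atTop (nhds (V x))) ∧
  (∀ g ∈ G, ∀ s t : ℝ≥0, s ≤ t → V (g t) ≤ V (g s)) ∧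
  (∀ w : ℝ → X, IsCompleteOrbit G w → (∀ s t : ℝ, V (w s) = V (w t)) →
    ∀ s t : ℝ, w s = w t)

end Semiflow

section MinimizingMovements

variable [MetricSpace U]

/-- The nodes `t⁰ = 0`, `tⁿ = τ⁰ + ⋯ + τ^{n-1}` of a partition. -/
def nodes (τ : ℕ → ℝ) (n : ℕ) : ℝ := ∑ i ∈ Finset.range n, τ i

/-- A discrete solution of the variational approximation scheme. -/
def IsDiscreteSolution (φ : U → EReal) (p : ℝ) (τ : ℕ → ℝ) (u₀ : U) (Ud : ℕ → U) : Prop :=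
  Ud 0 = u₀ ∧
  ∀ n : ℕ, ∀ v : U,
    ((dist (Ud (n+1)) (Ud n) ^ p / (p * τ n ^ (p-1)) : ℝ) : EReal) + φ (Ud (n+1)) ≤
      ((dist v (Ud n) ^ p / (p * τ n ^ (p-1)) : ℝ) : EReal) + φ v

/-- The left-continuous piecewise constant interpolant of a discrete solution. -/
def interp (τ : ℕ → ℝ) (Ud : ℕ → U) (t : ℝ) : U :=
  if h : ∃ n, t ≤ nodes τ n then Ud (Nat.find h) else Ud 0

/-- `u` is a Generalized Minimizing Movement for `φ` starting from `u₀`. -/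
def IsGMM (σ : TopologicalSpace U) (φ : U → EReal) (p : ℝ) (u₀ : U) (u : ℝ → U) : Prop :=
  ∃ (τs : ℕ → ℕ → ℝ) (Us : ℕ → ℕ → U) (D : ℕ → ℝ),
    (∀ k n, 0 < τs k n) ∧ (∀ k n, τs k n ≤ D k) ∧
    Filter.Tendsto D Filter.atTop (nhds (0:ℝ)) ∧
    (∀ k, IsDiscreteSolution φ p (τs k) u₀ (Us k)) ∧
    ∀ t : ℝ, 0 ≤ t →
      Filter.Tendsto (fun k => interp (τs k) (Us k) t) Filter.atTop (@nhds U σ (u t))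

end MinimizingMovements

section Banach

variable {B : Type*} [NormedAddCommGroup B] [NormedSpace ℝ B]

/-- The Fréchet subdifferential `∂φ(u)` of `φ : B → (-∞,∞]` at `u ∈ D(φ)`. -/
def FrechetSubdiff (φ : B → EReal) (u : B) : Set (StrongDual ℝ B) :=
  { ξ | φ u ≠ ⊤ ∧ ∀ ε : ℝ, 0 < ε → ∃ δ : ℝ, 0 < δ ∧ ∀ v : B, ‖v - u‖ < δ →
      φ u + ((ξ (v - u) - ε * ‖v - u‖ : ℝ) : EReal) ≤ φ v }

/-- Weak convergence in the dual `B'` (tested against the bidual). -/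
def WeakConvDual (ξn : ℕ → StrongDual ℝ B) (ξ : StrongDual ℝ B) : Prop :=
  ∀ F : StrongDual ℝ (StrongDual ℝ B),
    Filter.Tendsto (fun n => F (ξn n)) Filter.atTop (nhds (F ξ))

/-- The limiting subdifferential `∂_ℓφ(u)`. -/
def LimitingSubdiff (φ : B → EReal) (u : B) : Set (StrongDual ℝ B) :=
  { ξ | ∃ (un : ℕ → B) (ξn : ℕ → StrongDual ℝ B),
      (∀ n, ξn n ∈ FrechetSubdiff φ (un n)) ∧
      Filter.Tendsto un Filter.atTop (nhds u) ∧
      WeakConvDual ξn ξ ∧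
      ∃ C : ℝ, ∀ n, φ (un n) ≤ (C : EReal) }

/-- The strong limiting subdifferential `∂_sφ(u)`. -/
def StrongLimitingSubdiff (φ : B → EReal) (u : B) : Set (StrongDual ℝ B) :=
  { ξ | ∃ (un : ℕ → B) (ξn : ℕ → StrongDual ℝ B),
      (∀ n, ξn n ∈ FrechetSubdiff φ (un n)) ∧
      Filter.Tendsto un Filter.atTop (nhds u) ∧
      Filter.Tendsto ξn Filter.atTop (nhds ξ) ∧
      Filter.Tendsto (fun n => φ (un n)) Filter.atTop (nhds (φ u)) }

/-- The `p`-duality map `J_p(v) = {ξ ∈ B' : ⟨ξ,v⟩ = ‖v‖^p = ‖ξ‖_*^{p'}}`. -/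
def Jdual (p : ℝ) (v : B) : Set (StrongDual ℝ B) :=
  { ξ | ξ v = ‖v‖ ^ p ∧ ‖ξ‖ ^ (conjExp p) = ‖v‖ ^ p }

/-- The minimal dual norm `inf {‖ξ‖_* : ξ ∈ S}` of a set of dual elements (`∞` if empty). -/
def minNormSubdiff (S : Set (StrongDual ℝ B)) : ℝ≥0∞ :=
  ⨅ ξ ∈ S, (‖ξ‖₊ : ℝ≥0∞)

/-- The elements of minimal dual norm of a set of dual elements. -/
def ArgminSubdiff (S : Set (StrongDual ℝ B)) : Set (StrongDual ℝ B) :=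
  { ξ | ξ ∈ S ∧ ∀ η ∈ S, ‖ξ‖ ≤ ‖η‖ }

/-- The chain rule for `φ` with respect to its limiting subdifferential. -/
def ChainRuleLimiting (φ : B → EReal) (p : ℝ) : Prop :=
  ∀ T : ℝ, 0 < T → ∀ (u : ℝ → B) (ξ : ℝ → StrongDual ℝ B),
    ACpOn p T u →
    MeasureTheory.MemLp ξ (ENNReal.ofReal (conjExp p)) (volume.restrict (Ioc (0:ℝ) T)) →
    (∀ᵐ t ∂(volume : Measure ℝ), t ∈ Ioc (0:ℝ) T → ξ t ∈ LimitingSubdiff φ (u t)) →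
    ACRealOn 0 T (fun t => (φ (u t)).toReal) ∧
    ∀ᵐ t ∂(volume : Measure ℝ), t ∈ Ioc (0:ℝ) T →
      deriv (fun s => (φ (u s)).toReal) t = ξ t (deriv u t)

/-- `(λ,q)`-convexity of `φ` on a Banach space. -/
def LamQConvex (φ : B → EReal) (lam q : ℝ) : Prop :=
  ∀ u₀ u₁ : B, ∀ θ : ℝ, 0 ≤ θ → θ ≤ 1 →
    φ ((1-θ) • u₀ + θ • u₁) ≤
      ((1-θ : ℝ) : EReal) * φ u₀ + ((θ : ℝ) : EReal) * φ u₁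
        - (((lam/q) * θ * (1-θ) * ‖u₀ - u₁‖ ^ q : ℝ) : EReal)

/-- The set of (metric) solutions of the doubly nonlinear equation
`J_p(u'(t)) + ∂_ℓφ(u(t)) ∋ 0`, as curves in `D(φ)`. -/
def dnSolSet (φ : B → EReal) (p : ℝ) : Set (ℝ≥0 → Dom φ) :=
  { g | ∃ u : ℝ → B, ACploc p u ∧
      (∀ᵐ t ∂(volume : Measure ℝ), 0 < t →
        ∃ ξ ∈ Jdual p (deriv u t), -ξ ∈ LimitingSubdiff φ (u t)) ∧
      ∀ t : ℝ≥0, (g t).1 = u (t : ℝ) }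

end Banach

end GradientFlowPaper

/-! The energy `φ̄` of a generalized solution is nonincreasing, so the energies `φ̄_j(t_j)` are
bounded above by those of the bounded initial data. Since `φ(u_j(t_j)) ≤ φ̄_j(t_j)`, the points
`u_j(t_j)` lie in a sublevel set of `φ`, hence a subsequence converges in `σ` to some `u`; lower
semicontinuity of `φ` then bounds the energies from below along it, so a further subsequence of
energies converges to some `φ̄ ≥ φ(u)`, and `(u, φ̄)` is the limit in `(X, d_X)`. -/

namespace GradientFlowPaper

section

variable {U : Type*} [MetricSpace U] {σ : TopologicalSpace U} {dσ : U → U → ℝ}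
  {φ : U → EReal} {p : ℝ}

theorem energy_le_initial_of_mem_genSolSet {g : ℝ≥0 → Phase φ} (hg : g ∈ genSolSet σ φ p)
    (t : ℝ≥0) : (g t).1.2 ≤ (g 0).1.2 := by
  obtain ⟨u, c, hsol, hgc⟩ := hg
  rw [hgc t, hgc 0]
  exact (hsol.2.1 0 t le_rfl t.coe_nonneg).1

namespace StandingAssumptions

theorem dσ_nonneg (h : StandingAssumptions σ dσ φ p) (u v : U) : 0 ≤ dσ u v := by
  have := h.dσ_triangle u v u
  rw [(h.dσ_eq_zero u u).2 rfl, h.dσ_symm v u] at this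
  linarith

theorem energy_le_add_phaseDist (h : StandingAssumptions σ dσ φ p) (z w : Phase φ) :
    z.1.2 ≤ w.1.2 + phaseDist dσ φ z w := by
  have := h.dσ_nonneg z.1.1 w.1.1
  have := le_abs_self (z.1.2 - w.1.2)
  rw [phaseDist]
  linarith

theorem converges_phaseDist_of_tendsto (h : StandingAssumptions σ dσ φ p)
    {z : ℕ → Phase φ} {x : Phase φ}
    (hu : Tendsto (fun n => (z n).1.1) atTop (@nhds U σ x.1.1))
    (hc : Tendsto (fun n => (z n).1.2) atTop (𝓝 x.1.2)) :
    Converges (phaseDist dσ φ) z x := by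
  have hc' : Tendsto (fun n => |(z n).1.2 - x.1.2|) atTop (𝓝 0) := by
    simpa using (hc.sub_const x.1.2).abs
  simpa [Converges, phaseDist] using (h.dσ_weaker _ _ hu).add hc'

theorem eventually_lt_of_tendsto (h : StandingAssumptions σ dσ φ p) {un : ℕ → U} {u : U}
    (hu : Tendsto un atTop (@nhds U σ u)) {b : EReal} (hb : b < φ u) :
    ∀ᶠ n in atTop, b < φ (un n) :=
  eventually_lt_of_lt_liminf (hb.trans_le (h.σ_lsc un u hu))

theorem le_of_tendsto_of_le (h : StandingAssumptions σ dσ φ p) {un : ℕ → U} {u : U}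
    {c : ℕ → ℝ} {c₀ : ℝ}
    (hu : Tendsto un atTop (@nhds U σ u)) (hc : Tendsto c atTop (𝓝 c₀))
    (hle : ∀ n, φ (un n) ≤ c n) : φ u ≤ c₀ :=
  calc φ u ≤ liminf (fun n => φ (un n)) atTop := h.σ_lsc un u hu
    _ ≤ liminf (fun n => (c n : EReal)) atTop := liminf_le_liminf (.of_forall hle)
    _ = c₀ := ((continuous_coe_real_ereal.tendsto c₀).comp hc).liminf_eq

theorem exists_converges_subseq_of_energy_le (h : StandingAssumptions σ dσ φ p)
    (z : ℕ → Phase φ) (C : ℝ) (hz : ∀ n, (z n).1.2 ≤ C) :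
    ∃ (x : Phase φ) (k : ℕ → ℕ), StrictMono k ∧ Converges (phaseDist dσ φ) (z ∘ k) x := by
  have hφz : ∀ n, φ (z n).1.1 ≤ (z n).1.2 := fun n => (z n).2
  obtain ⟨u, k₁, hk₁, hu⟩ := h.compact_sublevels C (fun n => (z n).1.1)
    fun n => (hφz n).trans (EReal.coe_le_coe_iff.2 (hz n))
  obtain ⟨b, -, hb⟩ := EReal.lt_iff_exists_real_btwn.1 (bot_lt_iff_ne_bot.2 (h.proper.2 u))
  have hbounds : ∀ᶠ n in atTop, (z (k₁ n)).1.2 ∈ Icc b C :=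
    (h.eventually_lt_of_tendsto hu hb).mono fun n hn =>
      ⟨(EReal.coe_lt_coe_iff.1 (hn.trans_le (hφz (k₁ n)))).le, hz (k₁ n)⟩
  obtain ⟨c, -, k₂, hk₂, hc⟩ :=
    tendsto_subseq_of_frequently_bounded (Metric.isBounded_Icc b C) hbounds.frequently
  have hu₂ := hu.comp hk₂.tendsto_atTop
  have hφu : φ u ≤ c := h.le_of_tendsto_of_le hu₂ hc fun n => hφz (k₁ (k₂ n))
  exact ⟨⟨(u, c), hφu⟩, k₁ ∘ k₂, hk₁.comp hk₂, h.converges_phaseDist_of_tendsto hu₂ hc⟩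

end StandingAssumptions

end

/-- **Theorem (Asymptotic compactness).**
Under the standing assumptions, the generalized semiflow of generalized solutions is
asymptotically compact: for any sequence of generalized solutions with bounded set of
initial values and any sequence of times `t_j → ∞`, the evaluations
`(u_j(t_j), φ̄_j(t_j))` admit a subsequence converging in `(X, d_X)`. -/
theorem generalized_solutions_asymptotically_compact
    {U : Type*} [MetricSpace U] (σ : TopologicalSpace U) (dσ : U → U → ℝ)
    (φ : U → EReal) (p : ℝ)
    (h : StandingAssumptions σ dσ φ p) :
    ∀ g : ℕ → (ℝ≥0 → Phase φ), (∀ j, g j ∈ genSolSet σ φ p) →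
      IsBoundedIn (phaseDist dσ φ) (Set.range (fun j => g j 0)) →
      ∀ tj : ℕ → ℝ≥0, Filter.Tendsto (fun j => ((tj j : ℝ))) Filter.atTop Filter.atTop →
      ∃ (x : Phase φ) (k : ℕ → ℕ), StrictMono k ∧
        Converges (phaseDist dσ φ) (fun n => g (k n) (tj (k n))) x := by
  intro g hg ⟨R, hR⟩ tj _
  refine h.exists_converges_subseq_of_energy_le (fun j => g j (tj j)) ((g 0 0).1.2 + R)
    fun j => ?_
  calc (g j (tj j)).1.2 ≤ (g j 0).1.2 := energy_le_initial_of_mem_genSolSet (hg j) (tj j)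
    _ ≤ (g 0 0).1.2 + phaseDist dσ φ (g j 0) (g 0 0) := h.energy_le_add_phaseDist _ _
    _ ≤ (g 0 0).1.2 + R := by gcongr; exact hR _ ⟨j, rfl⟩ _ ⟨0, rfl⟩

end GradientFlowPaper
end
end

section
/- Under the standing assumptions: (i) the projection π₂ : X → ℝ, (u,φ̄) ↦ φ̄, is a Lyapunov function for the generalized semiflow S of generalized solutions; (ii) the set of rest points of S is exactly Z(S) = {(ū,φ̄) ∈ X : |∂⁻φ|(ū,φ̄) = 0}. -/
open Filter MeasureTheory Set Topology
open scoped ENNReal NNReal Classical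

noncomputable section

/-! Along a generalized solution the energy inequality makes `φ̄` nonincreasing, and wherever `φ̄`
takes the same value at two times both dissipation integrals vanish in between.
The vanishing of `∫ |u'|^p` forces `u` to be constant: `t ↦ d(u(a), u(t))` is absolutely
continuous, being dominated by the primitive of the modulus of `u`, and its derivative is bounded
by `|u'|`, hence vanishes a.e. Along a constant curve the vanishing of `∫ |∂⁻φ|^{p'}` says exactly
`|∂⁻φ|(ū, φ̄) = 0`; conversely a constant pair with zero slope satisfies the energy inequality. -/

theorem AbsolutelyContinuousOnInterval.of_dist_le {X Y : Type*} [PseudoMetricSpace X]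
    [PseudoMetricSpace Y] {f : ℝ → X} {g : ℝ → Y} {a b : ℝ}
    (hg : AbsolutelyContinuousOnInterval g a b)
    (h : ∀ x ∈ uIcc a b, ∀ y ∈ uIcc a b, dist (f x) (f y) ≤ dist (g x) (g y)) :
    AbsolutelyContinuousOnInterval f a b := by
  rw [absolutelyContinuousOnInterval_iff] at hg ⊢
  intro ε hε
  obtain ⟨δ, hδ, hgδ⟩ := hg ε hε
  refine ⟨δ, hδ, fun E hE hlen => (Finset.sum_le_sum fun i hi => ?_).trans_lt (hgδ E hE hlen)⟩
  exact h _ (hE.1 i hi).1 _ (hE.1 i hi).2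

theorem MeasureTheory.ae_eq_zero_of_abs_le_of_lintegral_rpow_eq_zero {α : Type*}
    [MeasurableSpace α] {μ : Measure α} {g h : α → ℝ} {p : ℝ} (hp : 0 < p)
    (hg : Measurable g) (hgh : ∀ᵐ x ∂μ, |g x| ≤ h x)
    (h0 : ∫⁻ x, ENNReal.ofReal (h x ^ p) ∂μ = 0) : g =ᵐ[μ] 0 := by
  have hle : ∫⁻ x, ENNReal.ofReal (|g x| ^ p) ∂μ ≤ ∫⁻ x, ENNReal.ofReal (h x ^ p) ∂μ :=
    lintegral_mono_ae <| hgh.mono fun x hx =>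
      ENNReal.ofReal_le_ofReal (Real.rpow_le_rpow (abs_nonneg _) hx hp.le)
  rw [h0, nonpos_iff_eq_zero, lintegral_eq_zero_iff (by fun_prop)] at hle
  filter_upwards [hle] with x hx
  by_contra hne
  have hpos : 0 < |g x| ^ p := Real.rpow_pos_of_pos (abs_pos.2 hne) p
  simp only [Pi.zero_apply, ENNReal.ofReal_eq_zero] at hx
  linarith

namespace GradientFlowPaper

lemma abs_sub_le_phaseDist {U : Type*} {dσ : U → U → ℝ} {φ : U → EReal}
    (hdσ : ∀ u v, 0 ≤ dσ u v) (z z' : Phase φ) : |z.1.2 - z'.1.2| ≤ phaseDist dσ φ z z' :=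
  le_add_of_nonneg_left (hdσ _ _)

variable {U : Type*} [MetricSpace U]

/- `metricDeriv` is a `limsup` in `ℝ`, a junk value where the difference quotients are unbounded;
differentiability of a function dominating `u` rules this out. -/
lemma isBoundedUnder_dist_div_of_le_dist {u : ℝ → U} {F : ℝ → ℝ} {t : ℝ}
    (hF : DifferentiableAt ℝ F t) (h : ∀ᶠ s in 𝓝 t, dist (u s) (u t) ≤ dist (F s) (F t)) :
    IsBoundedUnder (· ≤ ·) (𝓝[≠] t) (fun s => dist (u s) (u t) / |s - t|) := by
  refine (hasDerivAt_iff_tendsto_slope.1 hF.hasDerivAt).norm.isBoundedUnder_le.mono_le ?_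
  filter_upwards [nhdsWithin_le_nhds h] with s hs
  rw [slope_def_field, norm_div, Real.norm_eq_abs, ← Real.dist_eq]
  exact div_le_div_of_nonneg_right hs (abs_nonneg _)

lemma abs_deriv_le_metricDeriv {u : ℝ → U} {f : ℝ → ℝ} {t : ℝ}
    (hf : DifferentiableAt ℝ f t) (hfu : ∀ᶠ s in 𝓝 t, dist (f s) (f t) ≤ dist (u s) (u t))
    (hbdd : IsBoundedUnder (· ≤ ·) (𝓝[≠] t) (fun s => dist (u s) (u t) / |s - t|)) :
    |deriv f t| ≤ metricDeriv u t := by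
  have hslope := (hasDerivAt_iff_tendsto_slope.1 hf.hasDerivAt).norm
  rw [← Real.norm_eq_abs, ← hslope.limsup_eq]
  refine limsup_le_limsup ?_ hslope.isCoboundedUnder_le hbdd
  filter_upwards [nhdsWithin_le_nhds hfu] with s hs
  rw [slope_def_field, norm_div, Real.norm_eq_abs, ← Real.dist_eq]
  exact div_le_div_of_nonneg_right hs (abs_nonneg _)

theorem ACpOn.exists_dist_le_dist_absolutelyContinuous {p T : ℝ} {u : ℝ → U} (hp : 1 ≤ p)
    (hT : 0 ≤ T) (hu : ACpOn p T u) :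
    ∃ F : ℝ → ℝ, AbsolutelyContinuousOnInterval F 0 T ∧
      ∀ s ∈ Icc 0 T, ∀ t ∈ Icc 0 T, dist (u s) (u t) ≤ dist (F s) (F t) := by
  obtain ⟨m, hm, hmu⟩ := hu
  have hmi : IntervalIntegrable m volume 0 T :=
    (intervalIntegrable_iff_integrableOn_Icc_of_le hT).2 <|
      hm.integrable (ENNReal.one_le_ofReal.2 hp)
  refine ⟨fun x => ∫ r in 0..x, m r,
    hmi.absolutelyContinuousOnInterval_intervalIntegral left_mem_uIcc, ?_⟩
  have hmi' : ∀ x ∈ Icc 0 T, IntervalIntegrable m volume 0 x := fun x hx =>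
    hmi.mono_set (by rw [uIcc_of_le hT, uIcc_of_le hx.1]; exact Icc_subset_Icc_right hx.2)
  intro s hs t ht
  wlog hst : s ≤ t generalizing s t
  · rw [dist_comm, dist_comm (∫ r in 0..s, m r)]
    exact this t ht s hs (le_of_not_ge hst)
  calc dist (u s) (u t) ≤ ∫ r in s..t, m r := hmu s t hs.1 hst ht.2
    _ ≤ |∫ r in s..t, m r| := le_abs_self _
    _ = dist (∫ r in 0..s, m r) (∫ r in 0..t, m r) := by
      rw [dist_comm, Real.dist_eq, intervalIntegral.integral_interval_sub_left (hmi' t ht)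
        (hmi' s hs)]

theorem ACpOn.eq_of_lintegral_metricDeriv_rpow_eq_zero {p T : ℝ} {u : ℝ → U} (hp : 1 ≤ p)
    (hu : ACpOn p T u) (h0 : ∫⁻ r in Ioc 0 T, ENNReal.ofReal (metricDeriv u r ^ p) = 0)
    {a b : ℝ} (ha : a ∈ Icc 0 T) (hb : b ∈ Icc 0 T) : u a = u b := by
  have hT : 0 ≤ T := ha.1.trans ha.2
  obtain ⟨F, hF, huF⟩ := hu.exists_dist_le_dist_absolutelyContinuous hp hT
  set f : ℝ → ℝ := fun s => dist (u a) (u s)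
  have hfu : ∀ s t, dist (f s) (f t) ≤ dist (u s) (u t) := fun s t => by
    simpa only [f, Real.dist_eq, dist_comm (u a)] using abs_dist_sub_le (u s) (u t) (u a)
  have hf : AbsolutelyContinuousOnInterval f 0 T := hF.of_dist_le fun s hs t ht => by
    rw [uIcc_of_le hT] at hs ht
    exact (hfu s t).trans (huF s hs t ht)
  have hbound : ∀ᵐ t ∂volume.restrict (Ioo 0 T), |deriv f t| ≤ metricDeriv u t := by
    rw [ae_restrict_iff' measurableSet_Ioo]
    filter_upwards [hf.ae_differentiableAt, hF.ae_differentiableAt] with t hft hFt ht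
    rw [uIcc_of_le hT] at hft hFt
    have hnhds : Icc 0 T ∈ 𝓝 t := Icc_mem_nhds ht.1 ht.2
    have htT : t ∈ Icc 0 T := Ioo_subset_Icc_self ht
    refine abs_deriv_le_metricDeriv (hft htT) (Eventually.of_forall fun s => hfu s t) ?_
    exact isBoundedUnder_dist_div_of_le_dist (hFt htT)
      (mem_of_superset hnhds fun s hs => huF s hs t htT)
  -- `metricDeriv u` is not known to be measurable, so the vanishing of its energy is transferred
  -- to the measurable function `deriv f`.
  have hderiv : deriv f =ᵐ[volume.restrict (Ioo 0 T)] 0 :=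
    ae_eq_zero_of_abs_le_of_lintegral_rpow_eq_zero (p := p) (by linarith) (measurable_deriv f)
      hbound (by rwa [setLIntegral_congr Ioo_ae_eq_Ioc])
  rw [EventuallyEq, ae_restrict_iff' measurableSet_Ioo] at hderiv
  obtain ⟨C, hC⟩ := hf.const_of_ae_hasDerivAt_zero <| by
    filter_upwards [hf.ae_differentiableAt, hderiv,
      (Ioo_ae_eq_Icc (a := (0 : ℝ)) (b := T)).mem_iff] with t hft ht hIoo hIcc
    rw [uIcc_of_le hT] at hft hIcc
    simpa only [ht (hIoo.2 hIcc), Pi.zero_apply] using (hft hIcc).hasDerivAt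
  rw [uIcc_of_le hT] at hC
  have hfab : f b = f a := (hC b hb).trans (hC a ha).symm
  simpa only [f, dist_self, dist_eq_zero] using hfab

lemma conjExp_pos {p : ℝ} (hp : 1 < p) : 0 < conjExp p :=
  div_pos (by linarith) (by linarith)

section GeneralizedSolution

variable {σ : TopologicalSpace U} {φ : U → EReal} {p : ℝ} {u : ℝ → U} {c : ℝ → ℝ}

lemma IsGeneralizedSolution.lintegral_eq_zero_of_energy_eq (hp : 1 < p)
    (hsol : IsGeneralizedSolution σ φ p u c) {s t : ℝ} (hs : 0 ≤ s) (hst : s ≤ t)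
    (hc : c t = c s) :
    ∫⁻ r in Ioc s t, ENNReal.ofReal (metricDeriv u r ^ p) = 0 ∧
      ∫⁻ r in Ioc s t, weakRelaxedSlope σ φ (u r) (c r) ^ conjExp p = 0 := by
  have henergy := (hsol.2.1 s t hs hst).2
  rw [hc, sub_self, ENNReal.ofReal_zero, nonpos_iff_eq_zero, add_eq_zero, mul_eq_zero,
    mul_eq_zero] at henergy
  have hp' : ENNReal.ofReal (1 / p) ≠ 0 := by
    rw [ne_eq, ENNReal.ofReal_eq_zero, not_le]; positivity
  have hq' : ENNReal.ofReal (1 / conjExp p) ≠ 0 := by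
    rw [ne_eq, ENNReal.ofReal_eq_zero, not_le]; have := conjExp_pos hp; positivity
  exact ⟨henergy.1.resolve_left hp', henergy.2.resolve_left hq'⟩

theorem IsGeneralizedSolution.eq_of_energy_eq (hp : 1 < p)
    (hsol : IsGeneralizedSolution σ φ p u c) {T : ℝ} (hT : 0 < T) (hc : c T = c 0)
    {t : ℝ} (ht : t ∈ Icc 0 T) : u t = u 0 :=
  (hsol.1 T hT).eq_of_lintegral_metricDeriv_rpow_eq_zero hp.le
    (hsol.lintegral_eq_zero_of_energy_eq hp le_rfl hT.le hc).1 ht (left_mem_Icc.2 hT.le)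

lemma weakRelaxedSlope_eq_zero_of_isGeneralizedSolution (hp : 1 < p)
    (hsol : IsGeneralizedSolution σ φ p u c) {x : U} {y : ℝ} (hu : ∀ t, 0 ≤ t → u t = x)
    (hc : ∀ t, 0 ≤ t → c t = y) : weakRelaxedSlope σ φ x y = 0 := by
  have h0 := (hsol.lintegral_eq_zero_of_energy_eq hp le_rfl zero_le_one
    ((hc 1 zero_le_one).trans (hc 0 le_rfl).symm)).2
  rw [setLIntegral_congr_fun measurableSet_Ioc fun r hr => by
      rw [hu r hr.1.le, hc r hr.1.le], setLIntegral_const, Real.volume_Ioc, sub_zero,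
    ENNReal.ofReal_one, mul_one] at h0
  exact (ENNReal.rpow_eq_zero_iff_of_pos (conjExp_pos hp)).1 h0

end GeneralizedSolution

lemma isGeneralizedSolution_const (σ : TopologicalSpace U) (φ : U → EReal) {p : ℝ}
    (hp : 1 < p) {x : U} {y : ℝ} (hxy : φ x ≤ y) (hslope : weakRelaxedSlope σ φ x y = 0) :
    IsGeneralizedSolution σ φ p (fun _ => x) (fun _ => y) := by
  have hmd : metricDeriv (fun _ : ℝ => x) = 0 := funext fun r => by
    simp only [metricDeriv, dist_self, zero_div, limsup_const, Pi.zero_apply]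
  refine ⟨fun T _ => ⟨0, MemLp.zero, fun s t _ _ _ => by simp⟩, fun s t _ _ => ⟨le_rfl, ?_⟩,
    fun _ _ => hxy⟩
  simp [hmd, hslope, Real.zero_rpow (by linarith : p ≠ 0),
    ENNReal.zero_rpow_of_pos (conjExp_pos hp)]

section Phase

variable {σ : TopologicalSpace U} {φ : U → EReal} {p : ℝ} {w : ℝ → Phase φ}

lemma IsCompleteOrbit.exists_isGeneralizedSolution (hw : IsCompleteOrbit (genSolSet σ φ p) w)
    (s : ℝ) : ∃ u c, IsGeneralizedSolution σ φ p u c ∧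
      ∀ r, 0 ≤ r → (w (s + r)).1 = (u r, c r) := by
  obtain ⟨u, c, hsol, hval⟩ := hw s
  exact ⟨u, c, hsol, fun r hr => by simpa only [Real.coe_toNNReal r hr] using hval r.toNNReal⟩

theorem IsCompleteOrbit.eq_of_snd_eq (hp : 1 < p) (hw : IsCompleteOrbit (genSolSet σ φ p) w)
    (hV : ∀ s t, (w s).1.2 = (w t).1.2) {s t : ℝ} (hst : s ≤ t) : w s = w t := by
  obtain ⟨u, c, hsol, huc⟩ := hw.exists_isGeneralizedSolution s
  have hc : ∀ r, 0 ≤ r → c r = (w s).1.2 := fun r hr => by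
    rw [← hV (s + r), huc r hr]
  have hu : u (t - s) = u 0 := hsol.eq_of_energy_eq hp (by linarith : 0 < t - s + 1)
    ((hc _ (by linarith)).trans (hc 0 le_rfl).symm) ⟨sub_nonneg.2 hst, by linarith⟩
  apply Subtype.ext
  rw [← add_zero s, huc 0 le_rfl, show t = s + (t - s) by ring, huc _ (sub_nonneg.2 hst), hu,
    hc 0 le_rfl, hc _ (sub_nonneg.2 hst)]

theorem isRestPoint_genSolSet_iff (hp : 1 < p) (x : Phase φ) :
    IsRestPoint (genSolSet σ φ p) x ↔ weakRelaxedSlope σ φ x.1.1 x.1.2 = 0 := by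
  refine ⟨fun hx => ?_, fun hx _ => ⟨_, _, isGeneralizedSolution_const σ φ hp x.2 hx,
    fun _ => rfl⟩⟩
  obtain ⟨u, c, hsol, huc⟩ := IsCompleteOrbit.exists_isGeneralizedSolution hx 0
  exact weakRelaxedSlope_eq_zero_of_isGeneralizedSolution hp hsol
    (fun r hr => (congrArg Prod.fst (huc r hr)).symm)
    (fun r hr => (congrArg Prod.snd (huc r hr)).symm)

variable {dσ : U → U → ℝ}

theorem isLyapunov_snd (hp : 1 < p) (hdσ : ∀ u v, 0 ≤ dσ u v) :
    IsLyapunov (phaseDist dσ φ) (genSolSet σ φ p) (fun x => x.1.2) := by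
  refine ⟨fun x xn hx => ?_, ?_, fun w hw hV s t => ?_⟩
  · rw [tendsto_iff_dist_tendsto_zero]
    exact squeeze_zero (fun _ => dist_nonneg) (fun n => abs_sub_le_phaseDist hdσ _ _) hx
  · rintro g ⟨u, c, hsol, hval⟩ s t hst
    simpa only [hval] using (hsol.2.1 s t s.2 hst).1
  · rcases le_total s t with hst | hts
    · exact hw.eq_of_snd_eq hp hV hst
    · exact (hw.eq_of_snd_eq hp hV hts).symm

end Phase

lemma StandingAssumptions.dσ_nonneg_s5 {σ : TopologicalSpace U} {dσ : U → U → ℝ}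
    {φ : U → EReal} {p : ℝ} (h : StandingAssumptions σ dσ φ p) (u v : U) : 0 ≤ dσ u v := by
  have := h.dσ_triangle u v u
  rw [(h.dσ_eq_zero u u).2 rfl, h.dσ_symm v u] at this
  linarith

end GradientFlowPaper

namespace GradientFlowPaper

/-- **Proposition (Lyapunov function and rest points).**
Under the standing assumptions: (i) the projection `π₂ : X → ℝ` is a Lyapunov function
for the generalized semiflow `S` of generalized solutions; (ii) the set of rest points
of `S` is exactly `Z(S) = {(ū,φ̄) ∈ X : |∂⁻φ|(ū,φ̄) = 0}`. -/
theorem lyapunov_and_rest_points_generalized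
    {U : Type*} [MetricSpace U] (σ : TopologicalSpace U) (dσ : U → U → ℝ)
    (φ : U → EReal) (p : ℝ)
    (h : StandingAssumptions σ dσ φ p) :
    IsLyapunov (phaseDist dσ φ) (genSolSet σ φ p) (fun x => x.1.2) ∧
    { x : Phase φ | IsRestPoint (genSolSet σ φ p) x }
      = { x : Phase φ | weakRelaxedSlope σ φ x.1.1 x.1.2 = 0 } :=
  ⟨isLyapunov_snd h.p_gt h.dσ_nonneg_s5, Set.ext (isRestPoint_genSolSet_iff h.p_gt)⟩

end GradientFlowPaper
end
end

section
/- Assume the standing assumptions and the conditional continuity property (CONT). Then every generalized solution (u,φ̄) satisfies φ̄(t) = φ(u(t)) for almost every t ∈ (0,+∞), and the following energy inequality holds: for all t ≥ 0 and almost all s ∈ (0,t), (1/p)∫_s^t |u'|(r)^p dr + (1/p')∫_s^t |∂⁺φ|(u(r))^{p'} dr + φ(u(t)) ≤ φ(u(s)). -/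
open Filter MeasureTheory Set Topology
open scoped ENNReal NNReal Classical

noncomputable section

/-!
Where `φ (u r) ≠ φ̄ r`, (CONT) forbids any sequence `uₙ →σ u r` with `φ uₙ → φ̄ r` and
bounded slopes, so `|∂⁻φ|(u r, φ̄ r) = ∞`. The energy inequality makes `∫ |∂⁻φ|(u, φ̄)^{p'}`
finite, hence this happens only on a null set; it is measurable because `φ̄` is monotone and
`φ ∘ u` is lower semicontinuous (`u` is continuous, and `φ` is `d`-lower semicontinuous thanks to
the `σ`-compactness of its sublevels and the `σ`-lower semicontinuity of `d`). Where `φ̄ = φ ∘ u`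
the weak relaxed slope is the strong one, and the energy inequality for `(u, φ̄)` becomes the one
for `u`.
-/

namespace GradientFlowPaper

theorem measure_eq_zero_of_lintegral_ne_top {α : Type*} [MeasurableSpace α] {μ : Measure α}
    {f : α → ℝ≥0∞} {E : Set α} (hE : MeasurableSet E) (hfE : ∀ x ∈ E, f x = ⊤)
    (hf : ∫⁻ x, f x ∂μ ≠ ⊤) : μ E = 0 := by
  have hle : E.indicator (fun _ => ⊤) ≤ f := fun x => by
    by_cases hx : x ∈ E <;> simp [hx, hfE]
  have hfin := ae_lt_top (measurable_const.indicator hE)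
    (ne_top_of_le_ne_top hf (lintegral_mono hle))
  rw [measure_eq_zero_iff_ae_notMem]
  filter_upwards [hfin] with x hx hxE
  simp [hxE] at hx

theorem measurableSet_setOf_pos_ne {f : ℝ → EReal} {c : ℝ → ℝ}
    (hf : LowerSemicontinuous fun t => f (max t 0)) (hc : AntitoneOn c (Ici 0)) :
    MeasurableSet {t : ℝ | 0 < t ∧ f t ≠ c t} := by
  have hc' : Measurable fun t : ℝ => (c (max t 0) : EReal) :=
    measurable_coe_real_ereal.comp (Antitone.measurable fun a b hab =>
      hc (le_max_right a 0) (le_max_right b 0) (max_le_max hab le_rfl))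
  have hset : {t : ℝ | 0 < t ∧ f t ≠ c t} = Ioi 0 ∩ {t | f (max t 0) = c (max t 0)}ᶜ := by
    ext t
    simp +contextual [max_eq_left_of_lt]
  rw [hset]
  exact measurableSet_Ioi.inter (measurableSet_eq_fun hf.measurable hc').compl

section Metric

variable {U : Type*} [MetricSpace U]

theorem ACpOn.continuousOn {p T : ℝ} {u : ℝ → U} (hu : ACpOn p T u) (hp : 1 ≤ p) :
    ContinuousOn u (Icc 0 T) := by
  obtain ⟨m, hm, hdist⟩ := hu
  have hint : IntegrableOn m (Icc 0 T) := hm.integrable (by simpa using hp)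
  have hdist' : ∀ x ∈ Icc 0 T, ∀ y ∈ Icc 0 T, dist (u y) (u x) ≤ |∫ r in x..y, m r| := by
    intro x hx y hy
    rcases le_total x y with hxy | hyx
    · rw [dist_comm]
      exact (hdist x y hx.1 hxy hy.2).trans (le_abs_self _)
    · rw [intervalIntegral.integral_symm, abs_neg]
      exact (hdist y x hy.1 hyx hx.2).trans (le_abs_self _)
  intro x hx
  have hT : 0 ≤ T := hx.1.trans hx.2
  have hprim : ContinuousWithinAt (fun y => ∫ r in x..y, m r) (Icc 0 T) x := by
    rw [← uIcc_of_le hT] at hint hx ⊢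
    exact intervalIntegral.continuousOn_primitive_interval' hint.intervalIntegrable hx x hx
  rw [ContinuousWithinAt, tendsto_iff_dist_tendsto_zero]
  refine squeeze_zero' (Eventually.of_forall fun _ => dist_nonneg)
    (eventually_nhdsWithin_of_forall fun y hy => hdist' x hx y hy) ?_
  simpa using hprim.tendsto.abs

theorem ACploc.continuousOn {p : ℝ} {u : ℝ → U} (hu : ACploc p u) (hp : 1 ≤ p) :
    ContinuousOn u (Ici 0) := by
  intro t ht
  have ht' : (0 : ℝ) ≤ t := ht
  refine ((hu (t + 1) (by linarith)).continuousOn hp t ⟨ht', by linarith⟩).mono_of_mem_nhdsWithin ?_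
  rw [← Ici_inter_Iic]
  exact inter_mem_nhdsWithin _ (Iic_mem_nhds (by linarith))

theorem ACploc.lowerSemicontinuous_comp_max {p : ℝ} {u : ℝ → U} (hu : ACploc p u) (hp : 1 ≤ p)
    {φ : U → EReal} (hφ : ∀ (vn : ℕ → U) (v : U) (C : EReal),
      Tendsto (fun n => dist (vn n) v) atTop (𝓝 0) → (∀ n, φ (vn n) ≤ C) → φ v ≤ C) :
    LowerSemicontinuous fun t : ℝ => φ (u (max t 0)) := by
  have hcont : Continuous fun t : ℝ => u (max t 0) :=
    (hu.continuousOn hp).comp_continuous (continuous_id.max continuous_const)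
      fun t => le_max_right t 0
  refine lowerSemicontinuous_iff_isClosed_preimage.2 fun y =>
    IsSeqClosed.isClosed fun tn t htn ht => ?_
  exact hφ _ _ y (tendsto_iff_dist_tendsto_zero.1 ((hcont.tendsto t).comp ht)) htn

end Metric

section RelaxedSlopes

variable {U : Type*} [MetricSpace U] {σ : TopologicalSpace U} {φ : U → EReal}

/- `σ` is a local `TopologicalSpace U` instance here and would be picked up by unannotated
topological notions on `U`, so convergence in `d` is written through `dist`. -/
theorem StandingAssumptions.le_of_tendsto_dist {dσ : U → U → ℝ} {p : ℝ}
    (h : StandingAssumptions σ dσ φ p) {vn : ℕ → U} {v : U} {C : EReal}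
    (hv : Tendsto (fun n => dist (vn n) v) atTop (𝓝 0)) (hC : ∀ n, φ (vn n) ≤ C) :
    φ v ≤ C := by
  rcases eq_or_ne C ⊤ with rfl | hCtop
  · exact le_top
  obtain ⟨w, k, hk, hw⟩ :=
    h.compact_sublevels C.toReal vn fun n => (hC n).trans (EReal.le_coe_toReal hCtop)
  have hwv : w = v := by
    have := h.d_σ_lsc _ _ w v hw tendsto_const_nhds
    exact dist_le_zero.1 (this.trans_eq (hv.comp hk.tendsto_atTop).liminf_eq)
  subst hwv
  exact (h.σ_lsc _ _ hw).trans
    (liminf_le_of_frequently_le' (Frequently.of_forall fun n => hC (k n)))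

theorem weakRelaxedSlope_of_eq {x : U} {a : ℝ} (h : φ x = a) :
    weakRelaxedSlope σ φ x a = strongRelaxedSlope σ φ x := by
  rw [strongRelaxedSlope, h]
  rfl

theorem CondCont.eq_of_weakRelaxedSlope_lt_top (hcont : CondCont σ φ) {x : U} {a : ℝ}
    (hW : weakRelaxedSlope σ φ x a < ⊤) : φ x = a := by
  obtain ⟨L, ⟨un, hun, hφun, rfl⟩, hL⟩ := sInf_lt_iff.1 hW
  obtain ⟨C, hC⟩ := ENNReal.exists_nat_gt hL.ne
  have hbounded : ∀ᶠ n in atTop, φ (un n) < ((a + 1 : ℝ) : EReal) :=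
    hφun.eventually_lt_const (by exact_mod_cast lt_add_one a)
  obtain ⟨k, hk, hkP⟩ := extraction_of_frequently_atTop
    (hbounded.and_frequently (frequently_lt_of_liminf_lt (h := hC)))
  refine tendsto_nhds_unique (hcont _ x (hun.comp hk.tendsto_atTop)
    ⟨max (a + 1) C, fun n => ⟨?_, ?_⟩⟩) (hφun.comp hk.tendsto_atTop)
  · exact (hkP n).1.le.trans (by exact_mod_cast le_max_left _ _)
  · refine (hkP n).2.le.trans ?_
    rw [← ENNReal.ofReal_natCast]
    exact ENNReal.ofReal_le_ofReal (le_max_right _ _)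

theorem setLIntegral_strongRelaxedSlope_eq {u : ℝ → U} {c : ℝ → ℝ}
    (hae : ∀ᵐ t ∂(volume : Measure ℝ), 0 < t → (c t : EReal) = φ (u t))
    {s t q : ℝ} (hs : 0 ≤ s) :
    ∫⁻ r in Ioc s t, strongRelaxedSlope σ φ (u r) ^ q =
      ∫⁻ r in Ioc s t, weakRelaxedSlope σ φ (u r) (c r) ^ q := by
  refine setLIntegral_congr_fun_ae measurableSet_Ioc ?_
  filter_upwards [hae] with r hr hrI
  rw [weakRelaxedSlope_of_eq (hr (hs.trans_lt hrI.1)).symm]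

namespace IsGeneralizedSolution

variable {p : ℝ} {u : ℝ → U} {c : ℝ → ℝ}

theorem antitoneOn (hsol : IsGeneralizedSolution σ φ p u c) : AntitoneOn c (Ici 0) :=
  fun s hs _ _ hst => (hsol.2.1 s _ hs hst).1

theorem lintegral_weakRelaxedSlope_ne_top (hsol : IsGeneralizedSolution σ φ p u c)
    (hp : 1 < p) {s t : ℝ} (hs : 0 ≤ s) (hst : s ≤ t) :
    ∫⁻ r in Ioc s t, weakRelaxedSlope σ φ (u r) (c r) ^ conjExp p ≠ ⊤ := by
  have hp' : 0 < conjExp p := div_pos (by linarith) (by linarith)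
  have hbound := le_add_self.trans (hsol.2.1 s t hs hst).2
  intro htop
  rw [htop, ENNReal.mul_top (ENNReal.ofReal_pos.2 (one_div_pos.2 hp')).ne'] at hbound
  exact ENNReal.ofReal_ne_top (top_le_iff.1 hbound)

theorem ae_restrict_eq {dσ : U → U → ℝ} (h : StandingAssumptions σ dσ φ p)
    (hcont : CondCont σ φ) (hsol : IsGeneralizedSolution σ φ p u c) {T : ℝ} (hT : 0 ≤ T) :
    ∀ᵐ r ∂volume.restrict (Ioc 0 T), φ (u r) = c r := by
  have hp' : 0 < conjExp p := div_pos (by linarith [h.p_gt]) (by linarith [h.p_gt])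
  have hE := measurableSet_setOf_pos_ne (f := fun t => φ (u t))
    (hsol.1.lowerSemicontinuous_comp_max h.p_gt.le fun _ _ _ => h.le_of_tendsto_dist)
    hsol.antitoneOn
  have hslope : ∀ r ∈ {t : ℝ | 0 < t ∧ φ (u t) ≠ c t},
      weakRelaxedSlope σ φ (u r) (c r) ^ conjExp p = ⊤ := fun r hr => by
    rw [not_lt_top_iff.1 (mt hcont.eq_of_weakRelaxedSlope_lt_top hr.2),
      ENNReal.top_rpow_of_pos hp']
  have hnull := measure_eq_zero_of_lintegral_ne_top hE hslope
    (hsol.lintegral_weakRelaxedSlope_ne_top h.p_gt le_rfl hT)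
  filter_upwards [measure_eq_zero_iff_ae_notMem.1 hnull, ae_restrict_mem measurableSet_Ioc]
    with r hrE hr
  by_contra hne
  exact hrE ⟨hr.1, hne⟩

theorem ae_eq {dσ : U → U → ℝ} (h : StandingAssumptions σ dσ φ p) (hcont : CondCont σ φ)
    (hsol : IsGeneralizedSolution σ φ p u c) :
    ∀ᵐ t ∂(volume : Measure ℝ), 0 < t → (c t : EReal) = φ (u t) := by
  have hIoi : ⋃ n : ℕ, Ioc (0 : ℝ) n = Ioi 0 :=
    iUnion_Ioc_eq_Ioi_self_iff.2 fun x _ => exists_nat_ge x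
  have hae := (ae_restrict_iUnion_iff _ _).2 fun n : ℕ =>
    hsol.ae_restrict_eq h hcont n.cast_nonneg
  rw [hIoi, ae_restrict_iff' measurableSet_Ioi] at hae
  filter_upwards [hae] with t ht ht0 using (ht ht0).symm

end IsGeneralizedSolution

end RelaxedSlopes

/-- **Proposition (`φ̄ = φ ∘ u` for generalized solutions).**
Under the standing assumptions and (CONT), every generalized solution `(u,φ̄)` satisfies
`φ̄(t) = φ(u(t))` for a.e. `t ∈ (0,∞)`, and the energy inequality with the strong
relaxed slope holds for all `t ≥ 0` and almost all `s ∈ (0,t)`. -/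
theorem generalized_solution_energy_identification
    {U : Type*} [MetricSpace U] (σ : TopologicalSpace U) (dσ : U → U → ℝ)
    (φ : U → EReal) (p : ℝ)
    (h : StandingAssumptions σ dσ φ p)
    (hcont : CondCont σ φ) :
    ∀ (u : ℝ → U) (c : ℝ → ℝ), IsGeneralizedSolution σ φ p u c →
      (∀ᵐ t ∂(volume : Measure ℝ), 0 < t → (c t : EReal) = φ (u t)) ∧
      ∀ t : ℝ, 0 ≤ t → ∀ᵐ s ∂(volume : Measure ℝ), s ∈ Ioo (0:ℝ) t →
        (φ (u t)).toReal ≤ (φ (u s)).toReal ∧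
        ENNReal.ofReal (1/p) * (∫⁻ r in Ioc s t, ENNReal.ofReal (metricDeriv u r ^ p)) +
          ENNReal.ofReal (1/(conjExp p)) *
            (∫⁻ r in Ioc s t, strongRelaxedSlope σ φ (u r) ^ (conjExp p)) ≤
          ENNReal.ofReal ((φ (u s)).toReal - (φ (u t)).toReal) := by
  intro u c hsol
  have hae := hsol.ae_eq h hcont
  refine ⟨hae, fun t ht => ?_⟩
  filter_upwards [hae] with s hs ⟨hs0, hst⟩
  obtain ⟨hcst, henergy⟩ := hsol.2.1 s t hs0.le hst.le
  have hcs : (φ (u s)).toReal = c s := by rw [← hs hs0, EReal.toReal_coe]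
  have hct : (φ (u t)).toReal ≤ c t := by
    simpa using EReal.toReal_le_toReal (hsol.2.2 t ht) (h.proper.2 _) (EReal.coe_ne_top _)
  refine ⟨by linarith, ?_⟩
  rw [setLIntegral_strongRelaxedSlope_eq hae hs0.le]
  exact henergy.trans (ENNReal.ofReal_le_ofReal (by linarith))

end GradientFlowPaper
end
end

section
/- Let (U,d) be a metric space and φ : U → (−∞,+∞] a proper, d-lower semicontinuous functional which is (λ,p)-geodesically convex for some λ ∈ ℝ and p ∈ (1,∞). Then φ satisfies the conditional continuity property with respect to the metric topology: whenever d(u_n,u) → 0 and sup_n max{φ(u_n), |∂φ|(u_n)} < +∞, one has φ(u_n) → φ(u). -/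
open Filter MeasureTheory Set Topology
open scoped ENNReal NNReal Classical

noncomputable section

namespace GradientFlowPaper

/-! Joining `uₙ` to `u` by a geodesic, `(λ,p)`-convexity turns a bound `L` on the slope at `uₙ`
into `φ(uₙ) ≤ φ(u) + L d(uₙ,u) + |λ/p| d(uₙ,u)^p`, so `limsup φ(uₙ) ≤ φ(u)`; lower
semicontinuity gives the matching `liminf` bound. -/

section

variable {U : Type*} [MetricSpace U]

lemma eventually_slopeQuotient_lt_of_localSlope_lt {φ : U → EReal} {x : U} {L : ℝ}
    (h : localSlope φ x < ENNReal.ofReal L) :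
    ∀ᶠ v in 𝓝[≠] x, (φ x - φ v).toReal / dist x v < L :=
  (eventually_lt_of_limsup_lt h).mono fun _ hv => (ENNReal.ofReal_lt_ofReal_iff'.1 hv).1

lemma tendsto_nhdsNE_of_dist_eq_mul {γ : ℝ → U}
    (hγ : ∀ t, 0 ≤ t → t ≤ 1 → dist (γ 0) (γ t) = t * dist (γ 0) (γ 1))
    (hne : γ 0 ≠ γ 1) :
    Tendsto γ (𝓝[>] 0) (𝓝[≠] γ 0) := by
  have hunit : ∀ᶠ t in 𝓝[>] (0 : ℝ), t ∈ Ioc 0 1 := Ioc_mem_nhdsGT one_pos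
  have hd : 0 < dist (γ 0) (γ 1) := dist_pos.2 hne
  refine tendsto_nhdsWithin_iff.2 ⟨tendsto_iff_dist_tendsto_zero.2 ?_, ?_⟩
  · have hlin : Tendsto (fun t : ℝ => t * dist (γ 0) (γ 1)) (𝓝[>] 0) (𝓝 0) :=
      tendsto_nhdsWithin_of_tendsto_nhds
        ((continuous_mul_const (dist (γ 0) (γ 1))).tendsto' 0 0 (zero_mul _))
    refine hlin.congr' ?_
    filter_upwards [hunit] with t ht
    rw [dist_comm (γ t), hγ t ht.1.le ht.2]
  · filter_upwards [hunit] with t ht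
    rw [mem_compl_singleton_iff, ← dist_pos, dist_comm, hγ t ht.1.le ht.2]
    exact mul_pos ht.1 hd

lemma le_add_of_convexity_of_quotient_lt {a b g t d L k D : ℝ} (ht₀ : 0 < t) (ht₁ : t ≤ 1)
    (hD : 0 ≤ D) (hconv : g ≤ (1 - t) * a + t * b - k * t * (1 - t) * D)
    (hquot : a - g < L * (t * d)) :
    a ≤ b + (L * d + |k| * D) := by
  have hscaled : t * (a - b - L * d + k * (1 - t) * D) < 0 := by linarith
  have hdiff := neg_of_mul_neg_right hscaled ht₀.le
  have hcurv : -k * (1 - t) * D ≤ |k| * D := by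
    have hshrink : (1 - t) * D ≤ D := by nlinarith
    calc -k * (1 - t) * D = -k * ((1 - t) * D) := by ring
      _ ≤ |k| * ((1 - t) * D) := mul_le_mul_of_nonneg_right (neg_le_abs k) (by nlinarith)
      _ ≤ |k| * D := by gcongr
  linarith

lemma tendsto_const_add_coe_of_tendsto_zero {ι : Type*} {l : Filter ι} (a : EReal)
    {f : ι → ℝ} (hf : Tendsto f l (𝓝 0)) :
    Tendsto (fun i => a + (f i : EReal)) l (𝓝 a) := by
  have hsum := (EReal.continuousAt_add (p := (a, ((0 : ℝ) : EReal))) (by simp) (by simp)).tendsto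
  simpa only [Function.comp_def, EReal.coe_zero, add_zero] using
    hsum.comp (tendsto_const_nhds.prodMk_nhds (EReal.tendsto_coe.2 hf))

theorem GeodConvex.le_add_of_localSlope_lt {φ : U → EReal} {lam p L : ℝ}
    (hconv : GeodConvex φ lam p) (hbot : ∀ w, φ w ≠ ⊥) {x : U} (hx : φ x ≠ ⊤)
    (hslope : localSlope φ x < ENNReal.ofReal L) (u : U) :
    φ x ≤ φ u + ((L * dist x u + |lam / p| * dist x u ^ p : ℝ) : EReal) := by
  rcases eq_or_ne (φ u) ⊤ with hu | hu
  · rw [hu, EReal.top_add_coe]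
    exact le_top
  rw [← EReal.coe_toReal hx (hbot x), ← EReal.coe_toReal hu (hbot u), ← EReal.coe_add,
    EReal.coe_le_coe_iff]
  rcases eq_or_ne x u with rfl | hxu
  · simp only [dist_self, mul_zero, zero_add, le_add_iff_nonneg_right]
    positivity
  obtain ⟨γ, rfl, rfl, hgeod, hγconv⟩ := hconv x u hx hu
  have hnear := tendsto_nhdsNE_of_dist_eq_mul
    (fun t ht₀ ht₁ => by simpa using hgeod 0 t le_rfl ht₀ ht₁) hxu
  obtain ⟨t, ht, hquot⟩ := (Filter.Eventually.and (Ioc_mem_nhdsGT one_pos)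
    (hnear.eventually (eventually_slopeQuotient_lt_of_localSlope_lt hslope))).exists
  have hγt := hγconv t ht.1.le ht.2
  rw [← EReal.coe_toReal hx (hbot _), ← EReal.coe_toReal hu (hbot _), ← EReal.coe_mul,
    ← EReal.coe_mul, ← EReal.coe_add, ← EReal.coe_sub] at hγt
  have hγt_top : φ (γ t) ≠ ⊤ := (hγt.trans_lt (EReal.coe_lt_top _)).ne
  rw [← EReal.coe_toReal hγt_top (hbot _), EReal.coe_le_coe_iff] at hγt
  have hdt : dist (γ 0) (γ t) = t * dist (γ 0) (γ 1) := by
    simpa using hgeod 0 t le_rfl ht.1.le ht.2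
  rw [hdt, ← EReal.coe_toReal hx (hbot _), ← EReal.coe_toReal hγt_top (hbot _),
    ← EReal.coe_sub, EReal.toReal_coe, div_lt_iff₀ (mul_pos ht.1 (dist_pos.2 hxu))] at hquot
  exact le_add_of_convexity_of_quotient_lt ht.1 ht.2 (by positivity) hγt hquot

end

/-- **Remark (Geodesic convexity implies conditional continuity).**
If `φ` is proper, `d`-lower semicontinuous and `(λ,p)`-geodesically convex, then `φ`
satisfies the conditional continuity property with respect to the metric topology. -/
theorem geodesically_convex_implies_conditional_continuity
    {U : Type*} [MetricSpace U] (φ : U → EReal) (lam p : ℝ) (hp : 1 < p)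
    (hproper : (∃ u : U, φ u ≠ ⊤) ∧ ∀ u : U, φ u ≠ ⊥)
    (hlsc : LowerSemicontinuous φ)
    (hconv : GeodConvex φ lam p) :
    ∀ (un : ℕ → U) (u : U),
      Filter.Tendsto (fun n => dist (un n) u) Filter.atTop (nhds (0:ℝ)) →
      (∃ C : ℝ, ∀ n, φ (un n) ≤ (C : EReal) ∧ localSlope φ (un n) ≤ ENNReal.ofReal C) →
      Filter.Tendsto (fun n => φ (un n)) Filter.atTop (nhds (φ u)) := by
  rintro un u hdist ⟨C, hC⟩
  -- `ENNReal.ofReal` truncates at `0`, so a strict slope bound needs `L > 0`.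
  set L := |C| + 1
  have hbound (n : ℕ) : φ (un n) ≤
      φ u + ((L * dist (un n) u + |lam / p| * dist (un n) u ^ p : ℝ) : EReal) :=
    hconv.le_add_of_localSlope_lt hproper.2 ((hC n).1.trans_lt (EReal.coe_lt_top C)).ne
      ((hC n).2.trans_lt ((ENNReal.ofReal_lt_ofReal_iff (by positivity)).2
        (by linarith [le_abs_self C]))) u
  have herr : Tendsto (fun n => L * dist (un n) u + |lam / p| * dist (un n) u ^ p) atTop
      (𝓝 0) := by
    simpa using (hdist.const_mul L).add ((hdist.rpow_const_nhds_zero (by linarith)).const_mul _)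
  have hupper := tendsto_const_add_coe_of_tendsto_zero (φ u) herr
  refine tendsto_order.2 ⟨fun a ha => ?_, fun a ha => ?_⟩
  · exact (tendsto_iff_dist_tendsto_zero.2 hdist).eventually (hlsc u a ha)
  · filter_upwards [hupper.eventually (gt_mem_nhds ha)] with n hn using (hbound n).trans_lt hn

end GradientFlowPaper
end
end
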